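/- arXiv:2003.13267 — 2 statements merged into one kernel-verified Lean document; each statement's English description precedes it below -/
import Mathlib

section
/- Let k be a field and let C be a cocommutative k-coalgebra. Let K ⊆ C be a k-subspace such that Δ(K) is contained in the subspace C ⊗ K of C ⊗_k C. Then Δ(K) is contained in the subspace K ⊗ K of C ⊗_k C; in particular K, equipped with the restrictions of the comultiplication and counit, is a subcoalgebra of C. -/
open TensorProduct

/-- If `C` is a cocommutative coalgebra over a field `k` and `K ⊆ C` is a subspace with
`Δ(K) ⊆ C ⊗ K`, then `Δ(K) ⊆ K ⊗ K` (images of the natural maps into `C ⊗ C`). -/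
theorem stmt3 {k C : Type*} [Field k] [AddCommGroup C] [Module k C] [Coalgebra k C]
    (hcc : ∀ x : C, (TensorProduct.comm k C C) (Coalgebra.comul (R := k) x) =
      Coalgebra.comul (R := k) x)
    (K : Submodule k C)
    (hK : ∀ x ∈ K, Coalgebra.comul (R := k) x ∈
      LinearMap.range (TensorProduct.map (LinearMap.id : C →ₗ[k] C) K.subtype)) :
    ∀ x ∈ K, Coalgebra.comul (R := k) x ∈
      LinearMap.range (TensorProduct.map K.subtype K.subtype) := by
  intro x hx
  set y := Coalgebra.comul (R := k) x with hy
  set q := K.mkQ with hq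
  -- Δ(x) ∈ C ⊗ K, i.e. (id ⊗ q)(y) = 0.
  obtain ⟨z, hz⟩ := hK x hx
  have hmap : TensorProduct.map (LinearMap.id : C →ₗ[k] C) K.subtype
      = LinearMap.lTensor C K.subtype := rfl
  have hlq : LinearMap.lTensor C q y = 0 := by
    rw [hy, ← hz, hmap, ← LinearMap.comp_apply, ← LinearMap.lTensor_comp]
    have : q.comp K.subtype = 0 := by
      ext c; simp [hq, Submodule.Quotient.mk_eq_zero, c.2]
    rw [this, LinearMap.lTensor_zero, LinearMap.zero_apply]
  -- By cocommutativity, (q ⊗ id)(y) = 0 as well.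
  have hcomm : ∀ w : C ⊗[k] C, LinearMap.rTensor C q w
      = (TensorProduct.comm k C (C ⧸ K)) (LinearMap.lTensor C q
        ((TensorProduct.comm k C C) w)) := by
    intro w
    induction w using TensorProduct.induction_on with
    | zero => simp
    | tmul a b => simp
    | add a b ha hb => simp [map_add, ha, hb]
  have hrq : LinearMap.rTensor C q y = 0 := by
    rw [hcomm y, hcc x, ← hy, hlq, map_zero]
  -- From (id ⊗ q)(y) = 0, get y = (id ⊗ incl)(z') for some z' ∈ C ⊗ K.
  have hker : y ∈ LinearMap.range (LinearMap.lTensor C K.subtype) := by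
    rw [← lTensor_mkQ (Q := C) K]
    exact LinearMap.mem_ker.mpr hlq
  obtain ⟨z', hz'⟩ := hker
  -- Then (q ⊗ id)(z') = 0 in (C⧸K) ⊗ K, by injectivity of lTensor of subtype.
  have hinj : Function.Injective
      (LinearMap.lTensor (C ⧸ K) K.subtype) :=
    Module.Flat.lTensor_preserves_injective_linearMap K.subtype K.injective_subtype
  have hz'0 : LinearMap.rTensor K q z' = 0 := by
    apply hinj
    rw [map_zero]
    have : LinearMap.lTensor (C ⧸ K) K.subtype (LinearMap.rTensor K q z')
        = LinearMap.rTensor C q (LinearMap.lTensor C K.subtype z') := by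
      rw [← LinearMap.comp_apply, ← LinearMap.comp_apply,
        LinearMap.lTensor_comp_rTensor, LinearMap.rTensor_comp_lTensor]
    rw [this, hz', hrq]
  -- So z' ∈ range (subtype ⊗ id : K ⊗ K → C ⊗ K).
  have hz'' : z' ∈ LinearMap.range (LinearMap.rTensor K K.subtype) := by
    rw [← rTensor_mkQ (Q := K) K]
    exact LinearMap.mem_ker.mpr hz'0
  obtain ⟨w, hw⟩ := hz''
  refine ⟨w, ?_⟩
  have : TensorProduct.map K.subtype K.subtype
      = (LinearMap.lTensor C K.subtype).comp (LinearMap.rTensor K K.subtype) := by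
    rw [LinearMap.lTensor_comp_rTensor]
  rw [this, LinearMap.comp_apply, hw, hz']
end

section
/- Let k be a field, let H be a k-bialgebra whose underlying coalgebra is cocommutative, let A be a k-algebra equipped with a k-algebra homomorphism ψ : A → H ⊗_k A, and let j : A → H be a k-algebra homomorphism satisfying Δ ∘ j = (id_H ⊗ j) ∘ ψ, where Δ is the comultiplication of H. Then the image K = j(A) is a k-subalgebra of H satisfying Δ(K) ⊆ K ⊗ K inside H ⊗_k H; that is, K is a sub-bialgebra of H. -/
open TensorProduct

/-- Let `H` be a cocommutative `k`-bialgebra over a field `k`, `ψ : A → H ⊗ A` an algebra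
homomorphism and `j : A → H` an algebra homomorphism with `Δ ∘ j = (id ⊗ j) ∘ ψ`.  Then the
image `K = j(A)` (a subalgebra of `H`) satisfies `Δ(K) ⊆ K ⊗ K`, i.e. `K` is a
sub-bialgebra of `H`. -/
theorem stmt4 {k H A : Type*} [Field k] [Ring H] [Bialgebra k H] [Ring A] [Algebra k A]
    (hcc : ∀ x : H, (TensorProduct.comm k H H) (Coalgebra.comul (R := k) x) =
      Coalgebra.comul (R := k) x)
    (ψ : A →ₐ[k] H ⊗[k] A) (j : A →ₐ[k] H)
    (hj : ∀ a : A, Coalgebra.comul (R := k) (j a) =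
      (TensorProduct.map (LinearMap.id : H →ₗ[k] H) j.toLinearMap) (ψ a)) :
    ∀ x ∈ j.range, Coalgebra.comul (R := k) x ∈
      LinearMap.range (TensorProduct.map
        (Subalgebra.toSubmodule j.range).subtype
        (Subalgebra.toSubmodule j.range).subtype) := by
  intro x hx
  obtain ⟨a, rfl⟩ := hx
  set K := Subalgebra.toSubmodule j.range with hK
  set ι : K →ₗ[k] H := K.subtype with hι
  obtain ⟨p, hp⟩ := ι.exists_leftInverse_of_injective (by
    simp [hι, Submodule.ker_subtype])
  set q : H →ₗ[k] H := ι.comp p with hqdef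
  have hq : ∀ y ∈ j.range, q y = y := by
    intro y hy
    have : p y = ⟨y, hy⟩ := by
      have := LinearMap.congr_fun hp (⟨y, hy⟩ : K)
      simpa [hι] using this
    simp [hqdef, this, hι]
  have hqj : q.comp j.toLinearMap = j.toLinearMap := by
    ext y; exact hq _ ⟨y, rfl⟩
  set t := Coalgebra.comul (R := k) (j a) with ht
  refine ⟨TensorProduct.map p p t, ?_⟩
  have hidq : TensorProduct.map (LinearMap.id : H →ₗ[k] H) q t = t := by
    rw [ht, hj a, ← LinearMap.comp_apply, ← TensorProduct.map_comp, hqj,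
      LinearMap.id_comp]
  have hcomm : (TensorProduct.comm k H H) t = t := hcc (j a)
  have hswap : (TensorProduct.map q (LinearMap.id : H →ₗ[k] H)).comp
      (TensorProduct.comm k H H).toLinearMap =
      (TensorProduct.comm k H H).toLinearMap.comp
        (TensorProduct.map (LinearMap.id : H →ₗ[k] H) q) := by
    apply TensorProduct.ext'
    intro x y
    simp
  have hqid : TensorProduct.map q (LinearMap.id : H →ₗ[k] H) t = t := by
    conv_lhs => rw [← hcomm]
    have := LinearMap.congr_fun hswap t
    simp only [LinearMap.comp_apply, LinearEquiv.coe_coe] at this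
    rw [this, hidq, hcomm]
  have key : TensorProduct.map q q t = t := by
    have hfac : TensorProduct.map q q =
        (TensorProduct.map q (LinearMap.id : H →ₗ[k] H)).comp
          (TensorProduct.map (LinearMap.id : H →ₗ[k] H) q) := by
      rw [← TensorProduct.map_comp, LinearMap.comp_id, LinearMap.id_comp]
    rw [hfac, LinearMap.comp_apply, hidq, hqid]
  show TensorProduct.map ι ι (TensorProduct.map p p t) = t
  rw [← LinearMap.comp_apply, ← TensorProduct.map_comp, ← hqdef, key]
end
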